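/- arXiv:1505.05381 — 2 statements merged into one kernel-verified Lean document; each statement's English description precedes it below -/
import Mathlib

section
/- The commutator 𝒮' = T_{P'} ∘ T_P ∘ T_{P'}⁻¹ ∘ T_P⁻¹ is a translation: for every Y ∈ ℝ², T_{P'}(T_P(T_{P'}⁻¹(T_P⁻¹(Y)))) = Y + (P' − T_P(P')). In particular 𝒮' translates in the direction of the line PP' by the vector P' − T_P(P'). -/
/-!
Isotomic cevian feet are symmetric about the midpoints of the sides, so
`T_P(X) + T_{P'}(X) = S - X` with `S = A + B + C` at the three vertices, hence everywhere, both
sides being affine in `X`. Substituting `T_{P'} = S - id - T_P` into both composites, the terms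
`T_P(X)` and `T_P(T_P(X))` cancel and the commutator is translation by `S - (D + E + F)`; this
uses that the weights `1, 1, 1, -1, -1` of `S - X - T_P(X)` sum to `1`, which is special to
triangles. Finally `P' - T_P(P') = S - (D + E + F)` is a computation in barycentric coordinates.
-/

noncomputable section

abbrev Pt := EuclideanSpace ℝ (Fin 2)

section

variable {k V W : Type*} [Ring k] [AddCommGroup V] [Module k V] [AddCommGroup W] [Module k W]

theorem AffineMap.map_smul_add_smul_add_smul (f : V →ᵃ[k] W) {a b c : k} (h : a + b + c = 1)
    (x y z : V) : f (a • x + b • y + c • z) = a • f x + b • f y + c • f z := by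
  rw [f.decomp]
  simp only [Pi.add_apply, map_add, map_smul]
  match_scalars <;> simp [h]

theorem AffineMap.map_add_add_sub_sub (f : V →ᵃ[k] W) (a b c x y : V) :
    f (a + b + c - x - y) = f a + f b + f c - f x - f y := by
  rw [f.decomp]
  simp only [Pi.add_apply, map_add, map_sub]
  abel

theorem AffineMap.apply_eq_sub_sub_of_add_eq_sides {f g : V →ᵃ[k] V} {a b c : V}
    (hspan : affineSpan k {a, b, c} = ⊤)
    (ha : f a + g a = b + c) (hb : f b + g b = a + c) (hc : f c + g c = a + b) (x : V) :
    g x = a + b + c - x - f x := by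
  have hg : g = AffineMap.const k V (a + b + c) - AffineMap.id k V - f := by
    refine AffineMap.ext_on hspan ?_
    rintro p (rfl | rfl | rfl)
    all_goals simp only [AffineMap.coe_sub, AffineMap.coe_const, AffineMap.coe_id, Pi.sub_apply,
      Function.const_apply, id_eq]
    · linear_combination (norm := module) ha
    · linear_combination (norm := module) hb
    · linear_combination (norm := module) hc
  simp [hg]

theorem AffineMap.comp_eq_add_comp_of_add_eq_sides {f g : V →ᵃ[k] V} {a b c : V}
    (hspan : affineSpan k {a, b, c} = ⊤)
    (ha : f a + g a = b + c) (hb : f b + g b = a + c) (hc : f c + g c = a + b) (x : V) :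
    g (f x) = a + b + c - (f a + f b + f c) + f (g x) := by
  rw [apply_eq_sub_sub_of_add_eq_sides hspan ha hb hc,
    apply_eq_sub_sub_of_add_eq_sides hspan ha hb hc, f.map_add_add_sub_sub]
  abel

end

theorem AffineIndependent.affineSpan_eq_top_of_finrank_eq_two {k V : Type*} [DivisionRing k]
    [AddCommGroup V] [Module k V] [FiniteDimensional k V] (hV : Module.finrank k V = 2)
    {a b c : V} (h : AffineIndependent k ![a, b, c]) : affineSpan k {a, b, c} = ⊤ := by
  have hspan := h.affineSpan_eq_top_iff_card_eq_finrank_add_one.mpr (by simp [hV])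
  rwa [Matrix.range_cons, Matrix.range_cons_cons_empty] at hspan

theorem stmt8_general
    (A B C : Pt) (hABC : AffineIndependent ℝ ![A, B, C])
    (α β γ : ℝ)
    (hβγ : β + γ ≠ 0) (hγα : γ + α ≠ 0) (hαβ : α + β ≠ 0)
    (hs : α * β + β * γ + γ * α ≠ 0)
    (P' : Pt)
    (hP'' : P' = (α * β + β * γ + γ * α)⁻¹ • ((β * γ) • A + (γ * α) • B + (α * β) • C))
    (D E F : Pt)
    (hD : D = (β + γ)⁻¹ • (β • B + γ • C))
    (hE : E = (γ + α)⁻¹ • (α • A + γ • C))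
    (hF : F = (α + β)⁻¹ • (α • A + β • B))
    (D₃ E₃ F₃ : Pt)
    (hD₃ : D₃ = (β + γ)⁻¹ • (γ • B + β • C))
    (hE₃ : E₃ = (γ + α)⁻¹ • (γ • A + α • C))
    (hF₃ : F₃ = (α + β)⁻¹ • (β • A + α • B))
    (TP : Pt ≃ᵃ[ℝ] Pt) (hTPA : TP A = D) (hTPB : TP B = E) (hTPC : TP C = F)
    (TP' : Pt ≃ᵃ[ℝ] Pt) (hTP'A : TP' A = D₃) (hTP'B : TP' B = E₃) (hTP'C : TP' C = F₃)
    :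
    ∀ Y : Pt, TP' (TP (TP'.symm (TP.symm Y))) = Y + (P' - TP P') := by
  have hspan := hABC.affineSpan_eq_top_of_finrank_eq_two (finrank_euclideanSpace_fin (n := 2))
  have hA : TP A + TP' A = B + C := by
    rw [hTPA, hTP'A, hD, hD₃, ← smul_add, inv_smul_eq_iff₀ hβγ]; module
  have hB : TP B + TP' B = A + C := by
    rw [hTPB, hTP'B, hE, hE₃, ← smul_add, inv_smul_eq_iff₀ hγα]; module
  have hC : TP C + TP' C = A + B := by
    rw [hTPC, hTP'C, hF, hF₃, ← smul_add, inv_smul_eq_iff₀ hαβ]; module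
  have hshift : P' - TP P' = A + B + C - (TP A + TP B + TP C) := by
    have hw : (α * β + β * γ + γ * α)⁻¹ * (β * γ) + (α * β + β * γ + γ * α)⁻¹ * (γ * α)
        + (α * β + β * γ + γ * α)⁻¹ * (α * β) = 1 := by
      rw [← mul_add, ← mul_add, inv_mul_eq_one₀ hs]; ring
    rw [hP'', smul_add, smul_add, smul_smul, smul_smul, smul_smul,
      show TP _ = _ from TP.toAffineMap.map_smul_add_smul_add_smul hw A B C]
    simp only [AffineEquiv.coe_toAffineMap, hTPA, hTPB, hTPC, hD, hE, hF]
    generalize hsdef : α * β + β * γ + γ * α = s at hs ⊢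
    match_scalars <;> field_simp <;> rw [← hsdef] <;> ring
  intro Y
  have hcomm := AffineMap.comp_eq_add_comp_of_add_eq_sides (f := TP.toAffineMap)
    (g := TP'.toAffineMap) hspan hA hB hC (TP'.symm (TP.symm Y))
  simp only [AffineEquiv.coe_toAffineMap, AffineEquiv.apply_symm_apply] at hcomm
  rw [hcomm, hshift]
  abel

theorem stmt8
    (A B C : Pt) (hABC : AffineIndependent ℝ ![A, B, C])
    (α β γ : ℝ) (hsum : α + β + γ = 1)
    (hα : α ≠ 0) (hβ : β ≠ 0) (hγ : γ ≠ 0)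
    (hβγ : β + γ ≠ 0) (hγα : γ + α ≠ 0) (hαβ : α + β ≠ 0)
    (hs : α * β + β * γ + γ * α ≠ 0)
    (P : Pt) (hP : P = α • A + β • B + γ • C)
    (P' : Pt)
    (hP'' : P' = (α * β + β * γ + γ * α)⁻¹ • ((β * γ) • A + (γ * α) • B + (α * β) • C))
    (D E F : Pt)
    (hD : D = (β + γ)⁻¹ • (β • B + γ • C))
    (hE : E = (γ + α)⁻¹ • (α • A + γ • C))
    (hF : F = (α + β)⁻¹ • (α • A + β • B))
    (D₃ E₃ F₃ : Pt)
    (hD₃ : D₃ = (β + γ)⁻¹ • (γ • B + β • C))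
    (hE₃ : E₃ = (γ + α)⁻¹ • (γ • A + α • C))
    (hF₃ : F₃ = (α + β)⁻¹ • (β • A + α • B))
    (TP : Pt ≃ᵃ[ℝ] Pt) (hTPA : TP A = D) (hTPB : TP B = E) (hTPC : TP C = F)
    (TP' : Pt ≃ᵃ[ℝ] Pt) (hTP'A : TP' A = D₃) (hTP'B : TP' B = E₃) (hTP'C : TP' C = F₃)
    :
    ∀ Y : Pt, TP' (TP (TP'.symm (TP.symm Y))) = Y + (P' - TP P') :=
  stmt8_general A B C hABC α β γ hβγ hγα hαβ hs P' hP'' D E F hD hE hF D₃ E₃ F₃ hD₃ hE₃ hF₃ TP hTPA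
    hTPB hTPC TP' hTP'A hTP'B hTP'C
end
end

section
/- The affine map λ = T_{P'} ∘ T_P⁻¹ maps the conic 𝒞_P = ABCPQ to itself: for every quadratic polynomial q on ℝ² with nonzero coefficient vector vanishing at A, B, C, P, Q, and every Y ∈ ℝ² with q(Y) = 0, one also has q(T_{P'}(T_P⁻¹(Y))) = 0. -/
/-!
In barycentric coordinates for `ABC`, the conics through `A, B, C` are
`K(u, v, w) = p vw + q wu + r uv = 0`.
Passing through `P = (α : β : γ)` and `Q = (α(β+γ) : β(γ+α) : γ(α+β))` forces
`pα + qβ + rγ = 0`, because `αβγ (pα + qβ + rγ) = K(Q) - (αβ + βγ + γα) K(P)` identically.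
Write a point `Z` as `((β+γ)x, (γ+α)y, (α+β)z)`; then `T_P Z = (α(y+z), β(z+x), γ(x+y))` and
`T_{P'} Z = (γy+βz, γx+αz, βx+αy)`, and the difference of `K` at these two points is
`(pα+qβ+rγ)(αyz+βzx+γxy) - K(P)(xy+yz+zx)`. So `T_{P'} ∘ T_P⁻¹` preserves `K` on the whole plane.
-/

noncomputable section

/-- The quadratic polynomial `a*x^2 + b*x*y + c*y^2 + d*x + e*y + f` evaluated at a point. -/
def qeval (a b c d e f : ℝ) (W : Pt) : ℝ :=
  a * (W 0)^2 + b * (W 0) * (W 1) + c * (W 1)^2 + d * (W 0) + e * (W 1) + f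

theorem AffineMap.map_smul_add_smul_add_smul_s12 {k V W : Type*} [CommRing k]
    [AddCommGroup V] [Module k V] [AddCommGroup W] [Module k W] (f : V →ᵃ[k] W) {u v w : k}
    (h : u + v + w = 1) (A B C : V) :
    f (u • A + v • B + w • C) = u • f A + v • f B + w • f C := by
  rw [f.decomp]
  simp only [Pi.add_apply, map_add, map_smul]
  linear_combination (norm := module) -(h • f 0)

theorem AffineIndependent.exists_eq_smul_add_smul_add_smul {k V : Type*} [Field k]
    [AddCommGroup V] [Module k V] [FiniteDimensional k V] (hV : Module.finrank k V = 2) {A B C : V}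
    (h : AffineIndependent k ![A, B, C]) (Y : V) :
    ∃ u v w : k, u + v + w = 1 ∧ Y = u • A + v • B + w • C := by
  have hspan : affineSpan k (Set.range ![A, B, C]) = ⊤ := by
    rw [h.affineSpan_eq_top_iff_card_eq_finrank_add_one, hV]; rfl
  let T : AffineBasis (Fin 3) k V := ⟨![A, B, C], h, hspan⟩
  refine ⟨T.coord 0 Y, T.coord 1 Y, T.coord 2 Y, ?_, ?_⟩
  · simpa only [Fin.sum_univ_three] using T.sum_coord_apply_eq_one Y
  · have hY := (T.linear_combination_coord_eq_self Y).symm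
    rwa [Fin.sum_univ_three] at hY

section Cevian

variable {k V : Type*} [Field k] [AddCommGroup V] [Module k V] {A B C : V} {α β γ x y z : k}

theorem cevian_map_apply (T : V →ᵃ[k] V)
    (hA : T A = (β + γ)⁻¹ • (β • B + γ • C)) (hB : T B = (γ + α)⁻¹ • (α • A + γ • C))
    (hC : T C = (α + β)⁻¹ • (α • A + β • B))
    (hβγ : β + γ ≠ 0) (hγα : γ + α ≠ 0) (hαβ : α + β ≠ 0)
    (h : (β + γ) * x + (γ + α) * y + (α + β) * z = 1) :
    T (((β + γ) * x) • A + ((γ + α) * y) • B + ((α + β) * z) • C)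
      = (α * (y + z)) • A + (β * (z + x)) • B + (γ * (x + y)) • C := by
  rw [T.map_smul_add_smul_add_smul_s12 h, hA, hB, hC]
  match_scalars <;> field_simp
  ring

theorem isotomic_cevian_map_apply (T : V →ᵃ[k] V)
    (hA : T A = (β + γ)⁻¹ • (γ • B + β • C)) (hB : T B = (γ + α)⁻¹ • (γ • A + α • C))
    (hC : T C = (α + β)⁻¹ • (β • A + α • B))
    (hβγ : β + γ ≠ 0) (hγα : γ + α ≠ 0) (hαβ : α + β ≠ 0)
    (h : (β + γ) * x + (γ + α) * y + (α + β) * z = 1) :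
    T (((β + γ) * x) • A + ((γ + α) * y) • B + ((α + β) * z) • C)
      = (γ * y + β * z) • A + (γ * x + α * z) • B + (β * x + α * y) • C := by
  rw [T.map_smul_add_smul_add_smul_s12 h, hA, hB, hC]
  match_scalars <;> field_simp

theorem isotomcomplement_eq_div [CharZero k] {G P' Q : V} (hs : α * β + β * γ + γ * α ≠ 0)
    (hG : G = (3 : k)⁻¹ • (A + B + C))
    (hP' : P' = (α * β + β * γ + γ * α)⁻¹ • ((β * γ) • A + (γ * α) • B + (α * β) • C))
    (hQ : Q = G - (2 : k)⁻¹ • (P' - G)) :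
    Q = (α * (β + γ) / (2 * (α * β + β * γ + γ * α))) • A
      + (β * (γ + α) / (2 * (α * β + β * γ + γ * α))) • B
      + (γ * (α + β) / (2 * (α * β + β * γ + γ * α))) • C := by
  subst hG hP' hQ
  set σ := α * β + β * γ + γ * α with hσ
  match_scalars <;> field_simp <;> rw [hσ] <;> ring

end Cevian

/-- Barycentric equation of a general conic through the three vertices of the reference
triangle. -/
def circumconic {R : Type*} [CommRing R] (p q r u v w : R) : R :=
  p * (v * w) + q * (w * u) + r * (u * v)

theorem circumconic_div {K : Type*} [Field K] (p q r u v w t : K) :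
    circumconic p q r (u / t) (v / t) (w / t) = circumconic p q r u v w / t ^ 2 := by
  unfold circumconic
  ring

theorem circumconic_isotomic_cevian_eq {R : Type*} [CommRing R] [NoZeroDivisors R]
    {p q r α β γ : R} (hα : α ≠ 0) (hβ : β ≠ 0) (hγ : γ ≠ 0)
    (hP : circumconic p q r α β γ = 0)
    (hQ : circumconic p q r (α * (β + γ)) (β * (γ + α)) (γ * (α + β)) = 0) (x y z : R) :
    circumconic p q r (γ * y + β * z) (γ * x + α * z) (β * x + α * y)
      = circumconic p q r (α * (y + z)) (β * (z + x)) (γ * (x + y)) := by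
  have hL : α * β * γ * (p * α + q * β + r * γ) = 0 := by
    unfold circumconic at hP hQ
    linear_combination hQ - (α * β + β * γ + γ * α) * hP
  have hL' : p * α + q * β + r * γ = 0 :=
    (mul_eq_zero.mp hL).resolve_left (mul_ne_zero (mul_ne_zero hα hβ) hγ)
  unfold circumconic at hP ⊢
  linear_combination (α * (y * z) + β * (z * x) + γ * (x * y)) * hL' - (x * y + y * z + z * x) * hP

theorem exists_qeval_eq_circumconic (a b c d e f : ℝ) {A B C : Pt}
    (hA : qeval a b c d e f A = 0) (hB : qeval a b c d e f B = 0)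
    (hC : qeval a b c d e f C = 0) :
    ∃ p q r : ℝ, ∀ u v w : ℝ, u + v + w = 1 →
      qeval a b c d e f (u • A + v • B + w • C) = circumconic p q r u v w := by
  -- `p` is four times the value at the midpoint of `BC`, and similarly for `q`, `r`.
  refine ⟨4 * qeval a b c d e f ((2 : ℝ)⁻¹ • (B + C)), 4 * qeval a b c d e f ((2 : ℝ)⁻¹ • (C + A)),
    4 * qeval a b c d e f ((2 : ℝ)⁻¹ • (A + B)), fun u v w h => ?_⟩
  obtain rfl : w = 1 - u - v := by linear_combination h
  simp only [qeval, circumconic, PiLp.add_apply, PiLp.smul_apply, smul_eq_mul] at hA hB hC ⊢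
  linear_combination (u ^ 2 - u * (1 - u - v) - u * v) * hA + (v ^ 2 - v * (1 - u - v) - u * v) * hB
    + ((1 - u - v) ^ 2 - v * (1 - u - v) - u * (1 - u - v)) * hC

theorem stmt12_general
    (A B C : Pt) (hABC : AffineIndependent ℝ ![A, B, C])
    (α β γ : ℝ) (hsum : α + β + γ = 1)
    (hα : α ≠ 0) (hβ : β ≠ 0) (hγ : γ ≠ 0)
    (hβγ : β + γ ≠ 0) (hγα : γ + α ≠ 0) (hαβ : α + β ≠ 0)
    (hs : α * β + β * γ + γ * α ≠ 0)
    (G : Pt) (hG : G = (3:ℝ)⁻¹ • (A + B + C))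
    (P : Pt) (hP : P = α • A + β • B + γ • C)
    (P' : Pt)
    (hP'' : P' = (α * β + β * γ + γ * α)⁻¹ • ((β * γ) • A + (γ * α) • B + (α * β) • C))
    (Q : Pt) (hQ : Q = G - (2:ℝ)⁻¹ • (P' - G))
    (D E F : Pt)
    (hD : D = (β + γ)⁻¹ • (β • B + γ • C))
    (hE : E = (γ + α)⁻¹ • (α • A + γ • C))
    (hF : F = (α + β)⁻¹ • (α • A + β • B))
    (D₃ E₃ F₃ : Pt)
    (hD₃ : D₃ = (β + γ)⁻¹ • (γ • B + β • C))
    (hE₃ : E₃ = (γ + α)⁻¹ • (γ • A + α • C))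
    (hF₃ : F₃ = (α + β)⁻¹ • (β • A + α • B))
    (TP : Pt ≃ᵃ[ℝ] Pt) (hTPA : TP A = D) (hTPB : TP B = E) (hTPC : TP C = F)
    (TP' : Pt ≃ᵃ[ℝ] Pt) (hTP'A : TP' A = D₃) (hTP'B : TP' B = E₃) (hTP'C : TP' C = F₃)
    (a b c d e f : ℝ)
    (hqA : qeval a b c d e f A = 0) (hqB : qeval a b c d e f B = 0)
    (hqC : qeval a b c d e f C = 0) (hqP : qeval a b c d e f P = 0)
    (hqQ : qeval a b c d e f Q = 0)

    (Y : Pt) (hY : qeval a b c d e f Y = 0) :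
    qeval a b c d e f (TP' (TP.symm Y)) = 0 := by
  subst hD hE hF hD₃ hE₃ hF₃
  obtain ⟨p, q, r, hK⟩ := exists_qeval_eq_circumconic a b c d e f hqA hqB hqC
  have hKP : circumconic p q r α β γ = 0 := by rw [← hK α β γ hsum, ← hP, hqP]
  have hKQ : circumconic p q r (α * (β + γ)) (β * (γ + α)) (γ * (α + β)) = 0 := by
    have h2s : 2 * (α * β + β * γ + γ * α) ≠ 0 := mul_ne_zero two_ne_zero hs
    rw [isotomcomplement_eq_div hs hG hP'' hQ, hK _ _ _ ?_, circumconic_div,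
      div_eq_zero_iff] at hqQ
    · exact hqQ.resolve_right (pow_ne_zero 2 h2s)
    · rw [← add_div, ← add_div, div_eq_one_iff_eq h2s]
      ring
  obtain ⟨u, v, w, huvw, hZ⟩ :=
    hABC.exists_eq_smul_add_smul_add_smul finrank_euclideanSpace_fin (TP.symm Y)
  obtain ⟨x, rfl⟩ : ∃ x, u = (β + γ) * x := ⟨u / (β + γ), by field_simp⟩
  obtain ⟨y, rfl⟩ : ∃ y, v = (γ + α) * y := ⟨v / (γ + α), by field_simp⟩
  obtain ⟨z, rfl⟩ : ∃ z, w = (α + β) * z := ⟨w / (α + β), by field_simp⟩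
  have hY' : Y = (α * (y + z)) • A + (β * (z + x)) • B + (γ * (x + y)) • C := by
    rw [← TP.apply_symm_apply Y, hZ]
    exact cevian_map_apply (TP : Pt →ᵃ[ℝ] Pt) hTPA hTPB hTPC hβγ hγα hαβ huvw
  rw [hZ, ← AffineEquiv.coe_toAffineMap,
    isotomic_cevian_map_apply (TP' : Pt →ᵃ[ℝ] Pt) hTP'A hTP'B hTP'C hβγ hγα hαβ huvw,
    hK _ _ _ (by linear_combination huvw), circumconic_isotomic_cevian_eq hα hβ hγ hKP hKQ,
    ← hK _ _ _ (by linear_combination huvw), ← hY', hY]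

theorem stmt12
    (A B C : Pt) (hABC : AffineIndependent ℝ ![A, B, C])
    (α β γ : ℝ) (hsum : α + β + γ = 1)
    (hα : α ≠ 0) (hβ : β ≠ 0) (hγ : γ ≠ 0)
    (hβγ : β + γ ≠ 0) (hγα : γ + α ≠ 0) (hαβ : α + β ≠ 0)
    (hab : α ≠ β) (hbc : β ≠ γ) (hca : γ ≠ α)
    (hs : α * β + β * γ + γ * α ≠ 0)
    (G : Pt) (hG : G = (3:ℝ)⁻¹ • (A + B + C))
    (P : Pt) (hP : P = α • A + β • B + γ • C)
    (P' : Pt)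
    (hP'' : P' = (α * β + β * γ + γ * α)⁻¹ • ((β * γ) • A + (γ * α) • B + (α * β) • C))
    (Q : Pt) (hQ : Q = G - (2:ℝ)⁻¹ • (P' - G))
    (D E F : Pt)
    (hD : D = (β + γ)⁻¹ • (β • B + γ • C))
    (hE : E = (γ + α)⁻¹ • (α • A + γ • C))
    (hF : F = (α + β)⁻¹ • (α • A + β • B))
    (D₃ E₃ F₃ : Pt)
    (hD₃ : D₃ = (β + γ)⁻¹ • (γ • B + β • C))
    (hE₃ : E₃ = (γ + α)⁻¹ • (γ • A + α • C))
    (hF₃ : F₃ = (α + β)⁻¹ • (β • A + α • B))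
    (TP : Pt ≃ᵃ[ℝ] Pt) (hTPA : TP A = D) (hTPB : TP B = E) (hTPC : TP C = F)
    (TP' : Pt ≃ᵃ[ℝ] Pt) (hTP'A : TP' A = D₃) (hTP'B : TP' B = E₃) (hTP'C : TP' C = F₃)
    (a b c d e f : ℝ) (hq : (a, b, c, d, e, f) ≠ (0, 0, 0, 0, 0, 0))
    (hqA : qeval a b c d e f A = 0) (hqB : qeval a b c d e f B = 0)
    (hqC : qeval a b c d e f C = 0) (hqP : qeval a b c d e f P = 0)
    (hqQ : qeval a b c d e f Q = 0)

    (Y : Pt) (hY : qeval a b c d e f Y = 0) :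
    qeval a b c d e f (TP' (TP.symm Y)) = 0 :=
  stmt12_general A B C hABC α β γ hsum hα hβ hγ hβγ hγα hαβ hs G hG P hP P' hP'' Q hQ D E F hD hE hF
    D₃ E₃ F₃ hD₃ hE₃ hF₃ TP hTPA hTPB hTPC TP' hTP'A hTP'B hTP'C a b c d e f hqA hqB hqC hqP hqQ Y
    hY
end
end
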